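/- arXiv:2212.07363 — 4 statements merged into one kernel-verified Lean document; each statement's English description precedes it below -/
import Mathlib

section
/- The transition system induced by a marked t-PNID is generic: if m1 ∼_h m2 are isomorphic markings and m1 —(t,ψ)→ m1', then there exists a marking m2' and binding ψ' such that m2 —(t,ψ')→ m2', m1' ∼_h' m2' for some extension h' of h, and ψ(v) corresponds to ψ'(v) under the isomorphism for every variable v. -/
/-- A typed Petri net with identifiers (t-PNID), over places `P`,
transitions `T`, type labels `Lam`, identifiers `I` and variables `V`.
Arcs are inscribed with multisets of variable vectors. -/
structure PNID (P T Lam I V : Type*) where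
  typeI : I → Lam
  typeV : V → Lam
  placeType : P → List Lam
  preArc : P → T → Multiset (List V)
  postArc : T → P → Multiset (List V)

/-- Markings assign to each place a multiset of identifier vectors. -/
def Marking (P I : Type*) := P → Multiset (List I)

/-- The set of identifiers occurring in a marking. -/
def idsOf {P I : Type*} (m : Marking P I) : Set I :=
  {i | ∃ p l, l ∈ m p ∧ i ∈ l}

namespace PNID

variable {P T Lam I V : Type*} (N : PNID P T Lam I V)

def inVars (t : T) : Set V := {v | ∃ p l, l ∈ N.preArc p t ∧ v ∈ l}

def outVars (t : T) : Set V := {v | ∃ p l, l ∈ N.postArc t p ∧ v ∈ l}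

/-- Emitting variables of a transition. -/
def emitVars (t : T) : Set V := N.outVars t \ N.inVars t

/-- Collecting variables of a transition. -/
def delVars (t : T) : Set V := N.inVars t \ N.outVars t

/-- Emitter transitions for type `lam`. -/
def emitter (lam : Lam) (t : T) : Prop := ∃ v ∈ N.emitVars t, N.typeV v = lam

/-- Collector transitions for type `lam`. -/
def collector (lam : Lam) (t : T) : Prop := ∃ v ∈ N.delVars t, N.typeV v = lam

/-- Firing rule: `t` fires from `m` under injective, type-respecting binding
`ψ` whose emitting variables are bound to fresh identifiers, yielding `m'`. -/
def Fires (m : Marking P I) (t : T) (ψ : V → I) (m' : Marking P I) : Prop :=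
  Function.Injective ψ ∧
  (∀ v, N.typeI (ψ v) = N.typeV v) ∧
  (∀ v ∈ N.emitVars t, ψ v ∉ idsOf m) ∧
  (∀ p, (N.preArc p t).map (fun l => l.map ψ) ≤ m p) ∧
  (∀ p, m' p + (N.preArc p t).map (fun l => l.map ψ)
       = m p + (N.postArc t p).map (fun l => l.map ψ))

/-- Reachability of markings. -/
def Reach : Marking P I → Marking P I → Prop :=
  Relation.ReflTransGen (fun m m' => ∃ t ψ, N.Fires m t ψ m')

/-- Proper `lam`-completion. -/
def ProperlyCompleting (m0 : Marking P I) (lam : Lam) : Prop :=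
  ∀ m m' t ψ, N.Reach m0 m → N.Fires m t ψ m' → N.collector lam t →
    ∀ v ∈ N.delVars t, N.typeV v = lam → ψ v ∈ idsOf m → ψ v ∉ idsOf m'

/-- Weak `lam`-termination. -/
def WeaklyTerminating (m0 : Marking P I) (lam : Lam) : Prop :=
  ∀ m, N.Reach m0 m → ∀ i, N.typeI i = lam → i ∈ idsOf m →
    ∃ m', N.Reach m m' ∧ i ∉ idsOf m'

/-- Types used in the net. -/
def typesUsed : Set Lam := {lam | ∃ p, lam ∈ N.placeType p}

/-- Identifier soundness. -/
def IdSound (m0 : Marking P I) : Prop :=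
  ∀ lam ∈ N.typesUsed, N.ProperlyCompleting m0 lam ∧ N.WeaklyTerminating m0 lam

/-- Arc inscriptions match place types. -/
def WellTyped : Prop :=
  (∀ p t l, l ∈ N.preArc p t → l.map N.typeV = N.placeType p) ∧
  (∀ t p l, l ∈ N.postArc t p → l.map N.typeV = N.placeType p)

/-- Tokens of a marking match place types. -/
def MarkingTyped (m : Marking P I) : Prop :=
  ∀ p l, l ∈ m p → l.map N.typeI = N.placeType p

end PNID

/-- Marking isomorphism via a bijection on identifiers. -/
def MarkIso {P I : Type*} [DecidableEq I] (m1 m2 : Marking P I) (h : I ≃ I) : Prop :=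
  ∀ (p : P) (vec : List I) (k : ℕ),
    (m1 p).count vec = k ↔ (m2 p).count (vec.map h) = k

/-- the transition system induced by a marked t-PNID is
generic: isomorphic markings induce the same transitions modulo isomorphism. -/
theorem stmt_11 {P T Lam I V : Type*} [DecidableEq I] (N : PNID P T Lam I V)
    (m1 m2 m1' : Marking P I) (h : I ≃ I)
    (hty : ∀ i, N.typeI (h i) = N.typeI i)
    (hiso : MarkIso m1 m2 h) (t : T) (ψ : V → I)
    (hf : N.Fires m1 t ψ m1') :
    ∃ (m2' : Marking P I) (ψ' : V → I) (h' : I ≃ I),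
      (∀ i ∈ idsOf m1, h' i = h i) ∧
      N.Fires m2 t ψ' m2' ∧
      MarkIso m1' m2' h' ∧
      (∀ v : V, ψ' v = h' (ψ v)) := by
  obtain ⟨hinj, htyp, hfresh, hpre, heq⟩ := hf
  have hmapinj : Function.Injective (List.map (h : I → I)) :=
    List.map_injective_iff.mpr h.injective
  -- m2 p is the image of m1 p under componentwise h
  have hm2 : ∀ p, m2 p = (m1 p).map (List.map (h : I → I)) := by
    intro p
    refine Multiset.ext.mpr fun l => ?_
    have hl : l = (l.map (h.symm : I → I)).map (h : I → I) := by
      rw [List.map_map]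
      simp
    have key := (hiso p (l.map (h.symm : I → I))
      ((m1 p).count (l.map (h.symm : I → I)))).mp rfl
    rw [← hl] at key
    conv_rhs => rw [hl]
    rw [Multiset.count_map_eq_count' _ _ hmapinj]
    exact key
  -- idsOf m2 is the image of idsOf m1 under h
  have hids : ∀ i, i ∈ idsOf m2 ↔ h.symm i ∈ idsOf m1 := by
    intro i
    constructor
    · rintro ⟨p, l, hlm, hil⟩
      rw [hm2 p] at hlm
      obtain ⟨l0, hl0, rfl⟩ := Multiset.mem_map.mp hlm
      obtain ⟨j, hj, rfl⟩ := List.mem_map.mp hil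
      simp only [Equiv.symm_apply_apply]
      exact ⟨p, l0, hl0, hj⟩
    · rintro ⟨p, l, hlm, hil⟩
      refine ⟨p, l.map (h : I → I), ?_, ?_⟩
      · rw [hm2 p]; exact Multiset.mem_map_of_mem _ hlm
      · have : h (h.symm i) ∈ l.map (h : I → I) := List.mem_map_of_mem hil
        simpa using this
  refine ⟨fun p => (m1' p).map (List.map (h : I → I)), fun v => h (ψ v), h,
    fun i _ => rfl, ?_, ?_, fun v => rfl⟩
  · refine ⟨h.injective.comp hinj, fun v => (hty (ψ v)).trans (htyp v), ?_, ?_, ?_⟩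
    · intro v hv hmem
      have := (hids (h (ψ v))).mp hmem
      simp only [Equiv.symm_apply_apply] at this
      exact hfresh v hv this
    · intro p
      have : ((N.preArc p t).map (fun l => l.map ψ)).map (List.map (h : I → I))
          ≤ (m1 p).map (List.map (h : I → I)) := Multiset.map_le_map (hpre p)
      rw [hm2 p]
      simpa [Multiset.map_map, Function.comp_def, List.map_map] using this
    · intro p
      have := congrArg (Multiset.map (List.map (h : I → I))) (heq p)
      rw [Multiset.map_add, Multiset.map_add] at this
      rw [hm2 p]
      simpa [Multiset.map_map, Function.comp_def, List.map_map] using this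
  · intro p vec k
    rw [Multiset.count_map_eq_count' _ _ hmapinj vec]
end

section
/- In the self-loop addition construction, the identity relation on markings is a rooted weak bisimulation: given a marked t-PNID (N, m0) and a place p, the LTS of (N, m0) is weakly bisimilar to the LTS of A_p(N, m0) with the added self-loop transition hidden (relabeled τ), via the relation relating equal markings on the common places. -/
def TauStep {S A : Type*} (tr : S → Option A → S → Prop) : S → S → Prop :=
  fun p q => tr p none q

def WeakStep {S A : Type*} (tr : S → Option A → S → Prop) :
    S → Option A → S → Prop :=
  fun p a q =>
    match a with
    | none => Relation.ReflTransGen (TauStep tr) p q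
    | some a => ∃ q1 q2, Relation.ReflTransGen (TauStep tr) p q1 ∧
        tr q1 (some a) q2 ∧ Relation.ReflTransGen (TauStep tr) q2 q

def IsWeakSim {S1 S2 A : Type*} (tr1 : S1 → Option A → S1 → Prop)
    (tr2 : S2 → Option A → S2 → Prop) (R : S1 → S2 → Prop) : Prop :=
  ∀ p q, R p q → ∀ a p', tr1 p a p' →
    (a = none ∧ R p' q) ∨ ∃ q', WeakStep tr2 q a q' ∧ R p' q'

def IsWeakBisim {S1 S2 A : Type*} (tr1 : S1 → Option A → S1 → Prop)
    (tr2 : S2 → Option A → S2 → Prop) (R : S1 → S2 → Prop) : Prop :=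
  IsWeakSim tr1 tr2 R ∧ IsWeakSim tr2 tr1 (fun q p => R p q)

/-- Self-loop addition `A_p`: a fresh transition consuming and reproducing a
token `[μ]` in place `p0`. -/
def selfLoopAdd {P T Lam I V : Type*} [DecidableEq P] (N : PNID P T Lam I V)
    (p0 : P) (μ : List V) : PNID P (T ⊕ Unit) Lam I V where
  typeI := N.typeI
  typeV := N.typeV
  placeType := N.placeType
  preArc := fun p t => match t with
    | .inl t => N.preArc p t
    | .inr _ => if p = p0 then {μ} else 0
  postArc := fun t p => match t with
    | .inl t => N.postArc t p
    | .inr _ => if p = p0 then {μ} else 0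


lemma fires_inl_iff {P T Lam I V : Type*} [DecidableEq P] (N : PNID P T Lam I V)
    (p0 : P) (μ : List V) (m m' : Marking P I) (t : T) (ψ : V → I) :
    (selfLoopAdd N p0 μ).Fires m (Sum.inl t) ψ m' ↔ N.Fires m t ψ m' := by
  simp [PNID.Fires, selfLoopAdd, PNID.emitVars, PNID.inVars, PNID.outVars]

lemma fires_inr_eq {P T Lam I V : Type*} [DecidableEq P] (N : PNID P T Lam I V)
    (p0 : P) (μ : List V) (m m' : Marking P I) (ψ : V → I)
    (h : (selfLoopAdd N p0 μ).Fires m (Sum.inr ()) ψ m') : m' = m := by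
  obtain ⟨-, -, -, -, h5⟩ := h
  funext p
  have := h5 p
  exact add_right_cancel this

/-- the identity relation on markings is a rooted weak
bisimulation between the LTS of `(N, m0)` and that of `A_p(N, m0)` with the
added self-loop transition hidden (relabeled τ). -/
theorem stmt_12 {P T Lam I V : Type*} [DecidableEq P] (N : PNID P T Lam I V)
    (p0 : P) (μ : List V) (hμ : μ.map N.typeV = N.placeType p0)
    (m0 : Marking P I) :
    IsWeakBisim
      (fun (m : Marking P I) (l : Option (T × (V → I))) (m' : Marking P I) =>
        ∃ t ψ, l = some (t, ψ) ∧ N.Fires m t ψ m')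
      (fun (m : Marking P I) (l : Option (T × (V → I))) (m' : Marking P I) =>
        (∃ t ψ, l = some (t, ψ) ∧ (selfLoopAdd N p0 μ).Fires m (Sum.inl t) ψ m') ∨
        (l = none ∧ ∃ ψ, (selfLoopAdd N p0 μ).Fires m (Sum.inr ()) ψ m'))
      (fun m m' => m = m') ∧
    (fun (m : Marking P I) (m' : Marking P I) => m = m') m0 m0 := by
  refine ⟨⟨?_, ?_⟩, rfl⟩
  · rintro p q rfl a p' ⟨t, ψ, rfl, hf⟩
    right
    refine ⟨p', ⟨p, p', Relation.ReflTransGen.refl, ?_, Relation.ReflTransGen.refl⟩, rfl⟩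
    exact Or.inl ⟨t, ψ, rfl, (fires_inl_iff N p0 μ p p' t ψ).mpr hf⟩
  · rintro p q rfl a p' (⟨t, ψ, rfl, hf⟩ | ⟨rfl, ψ, hf⟩)
    · right
      exact ⟨p', ⟨q, p', Relation.ReflTransGen.refl,
        ⟨t, ψ, rfl, (fires_inl_iff N p0 μ q p' t ψ).mp hf⟩,
        Relation.ReflTransGen.refl⟩, rfl⟩
    · exact Or.inl ⟨rfl, (fires_inr_eq N p0 μ q p' ψ hf).symm⟩
end

section
/- Every marked resource closure of a marked t-PNID satisfies resource preservation: for every reachable marking m, every resource type η, and every resource identifier r of type η occurring in m, r already occurs in the initial marking. -/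
open scoped Classical

/-- A (full) resource closure of a t-PNID `N`: for every object type `lam`,
a fresh resource type `etaOf lam` together with a resource place and an
assignment place are added.  `ret lam` selects the `lam`-collectors that
return their resource, `sync lam` the internal transitions that read the
assignment; `objV lam t` enumerates the distinct `lam`-typed variables of `t`
and `resV lam t` the chosen fresh resource variables. -/
structure FullRClosure (P T Lam I V : Type*) where
  N : PNID P T Lam I V
  /-- partition of types into object types (`¬ isRes`) and resource types -/
  isRes : Lam → Prop
  /-- all types used by the original net are object types -/
  obj_used : ∀ lam ∈ N.typesUsed, ¬ isRes lam
  /-- the resource type associated to each object type -/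
  etaOf : Lam → Lam
  eta_res : ∀ lam, isRes (etaOf lam)
  eta_inj : Function.Injective etaOf
  /-- collectors that return their resource -/
  ret : Lam → T → Prop
  ret_col : ∀ lam t, ret lam t → N.collector lam t
  /-- internal transitions that read the assignment place -/
  sync : Lam → T → Prop
  sync_int : ∀ lam t, sync lam t → ¬ N.collector lam t ∧ ¬ N.emitter lam t
  objV : Lam → T → List V
  resV : Lam → T → List V
  len_eq : ∀ lam t, (resV lam t).length = (objV lam t).length
  objV_nodup : ∀ lam t, (objV lam t).Nodup
  resV_nodup : ∀ lam t, (resV lam t).Nodup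
  resV_type : ∀ lam t, ∀ v ∈ resV lam t, N.typeV v = etaOf lam
  resV_fresh : ∀ lam t, ∀ v ∈ resV lam t, v ∉ N.inVars t ∧ v ∉ N.outVars t
  objV_emit : ∀ lam t, N.emitter lam t →
    ∀ v, (v ∈ objV lam t ↔ N.typeV v = lam ∧ v ∈ N.outVars t)
  objV_col : ∀ lam t, N.collector lam t →
    ∀ v, (v ∈ objV lam t ↔ N.typeV v = lam ∧ v ∈ N.inVars t)
  objV_sync : ∀ lam t, sync lam t →
    ∀ v, (v ∈ objV lam t ↔ N.typeV v = lam ∧ v ∈ N.inVars t)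

namespace FullRClosure

variable {P T Lam I V : Type*} (C : FullRClosure P T Lam I V)

/-- Resource tokens `(r)` of the closure arcs for type `lam` at `t`. -/
noncomputable def resTok (lam : Lam) (t : T) : Multiset (List V) :=
  ((C.resV lam t).map (fun r => [r]) : List (List V))

/-- Assignment tokens `(x, r)` of the closure arcs for type `lam` at `t`. -/
noncomputable def asgTok (lam : Lam) (t : T) : Multiset (List V) :=
  (((C.objV lam t).zip (C.resV lam t)).map (fun xr => [xr.1, xr.2]) : List (List V))

/-- The closure net: places are the original ones plus, for every object type
`lam`, a resource place `(lam, false)` and an assignment place `(lam, true)`. -/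
noncomputable def net : PNID (P ⊕ Lam × Bool) T Lam I V where
  typeI := C.N.typeI
  typeV := C.N.typeV
  placeType := fun p => match p with
    | .inl p => C.N.placeType p
    | .inr (lam, false) => [C.etaOf lam]
    | .inr (lam, true) => [lam, C.etaOf lam]
  preArc := fun p t => match p with
    | .inl p => C.N.preArc p t
    | .inr (lam, false) => if C.N.emitter lam t then C.resTok lam t else 0
    | .inr (lam, true) =>
        if C.N.collector lam t ∨ C.sync lam t then C.asgTok lam t else 0
  postArc := fun t p => match p with
    | .inl p => C.N.postArc t p
    | .inr (lam, false) => if C.ret lam t then C.resTok lam t else 0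
    | .inr (lam, true) =>
        if C.N.emitter lam t ∨ C.sync lam t then C.asgTok lam t else 0

/-- The initial marking of a marked resource closure: the original marking,
plus a finite set `Res lam` of resources in each resource place. -/
def init (C : FullRClosure P T Lam I V) (m0 : Marking P I)
    (Res : Lam → Finset I) : Marking (P ⊕ Lam × Bool) I :=
  fun p =>
    have _ := C
    match p with
  | .inl p => m0 p
  | .inr (lam, false) => (Res lam).val.map (fun r => [r])
  | .inr (lam, true) => 0

end FullRClosure

section Aux

variable {P T Lam I V : Type*} (C : FullRClosure P T Lam I V)

/-- output variables of the original net have used (hence object) types -/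
lemma aux_out_used (hWT : C.N.WellTyped) {t : T} {v : V}
    (hv : v ∈ C.N.outVars t) : C.N.typeV v ∈ C.N.typesUsed := by
  obtain ⟨p, l, hl, hvl⟩ := hv
  exact ⟨p, (hWT.2 t p l hl) ▸ List.mem_map_of_mem (f := C.N.typeV) hvl⟩

/-- Key lemma: resource-typed output variables of the closure net are
also input variables, i.e. no emitting variable has resource type. -/
lemma aux_key (hWT : C.N.WellTyped) {t : T} {v : V}
    (hv : v ∈ (C.net).outVars t) (hres : C.isRes (C.N.typeV v)) :
    v ∈ (C.net).inVars t := by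
  obtain ⟨p, l, hl, hvl⟩ := hv
  have hzip_snd : ∀ lam, ((C.objV lam t).zip (C.resV lam t)).map Prod.snd
      = C.resV lam t := fun lam =>
    List.map_snd_zip (le_of_eq (C.len_eq lam t))
  -- helper: v ∈ resV lam t and asgTok is a pre-arc ⇒ done
  have hres_in_asg : ∀ lam, v ∈ C.resV lam t →
      (C.N.collector lam t ∨ C.sync lam t) → v ∈ (C.net).inVars t := by
    intro lam hvres hcs
    have : v ∈ ((C.objV lam t).zip (C.resV lam t)).map Prod.snd := by
      rw [hzip_snd]; exact hvres
    obtain ⟨xr, hxr, hxr2⟩ := List.mem_map.mp this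
    refine ⟨Sum.inr (lam, true), [xr.1, xr.2], ?_, ?_⟩
    · show _ ∈ (if C.N.collector lam t ∨ C.sync lam t then C.asgTok lam t else 0)
      rw [if_pos hcs]
      exact Multiset.mem_coe.mpr (List.mem_map_of_mem hxr)
    · rw [hxr2]; simp
  match p with
  | .inl p =>
    exact absurd hres (C.obj_used _ (aux_out_used C hWT ⟨p, l, hl, hvl⟩))
  | .inr (lam, false) =>
    -- postArc: if ret lam t then resTok else 0
    have hl' : l ∈ (if C.ret lam t then C.resTok lam t else 0 :
        Multiset (List V)) := hl
    by_cases hret : C.ret lam t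
    · rw [if_pos hret] at hl'
      obtain ⟨r, hr, rfl⟩ := List.mem_map.mp (Multiset.mem_coe.mp hl')
      have hvr : v ∈ C.resV lam t := by
        simp at hvl; subst hvl; exact hr
      exact hres_in_asg lam hvr (Or.inl (C.ret_col lam t hret))
    · rw [if_neg hret] at hl'; simp at hl'
  | .inr (lam, true) =>
    have hl' : l ∈ (if C.N.emitter lam t ∨ C.sync lam t then C.asgTok lam t
        else 0 : Multiset (List V)) := hl
    by_cases hes : C.N.emitter lam t ∨ C.sync lam t
    · rw [if_pos hes] at hl'
      obtain ⟨xr, hxr, rfl⟩ := List.mem_map.mp (Multiset.mem_coe.mp hl')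
      obtain ⟨h1, h2⟩ := List.of_mem_zip hxr
      have hvl' : v = xr.1 ∨ v = xr.2 := by simpa using hvl
      rcases hvl' with rfl | rfl
      · -- v is an object variable
        rcases hes with hemit | hsync
        · have := (C.objV_emit lam t hemit xr.1).mp h1
          exact absurd hres (C.obj_used _ (aux_out_used C hWT this.2))
        · have := (C.objV_sync lam t hsync xr.1).mp h1
          obtain ⟨p0, l0, hl0, hv0⟩ := this.2
          exact ⟨Sum.inl p0, l0, hl0, hv0⟩
      · -- v is a resource variable
        rcases hes with hemit | hsync
        · refine ⟨Sum.inr (lam, false), [xr.2], ?_, by simp⟩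
          show _ ∈ (if C.N.emitter lam t then C.resTok lam t else 0)
          rw [if_pos hemit]
          exact Multiset.mem_coe.mpr (List.mem_map_of_mem h2)
        · exact hres_in_asg lam h2 (Or.inr hsync)
    · rw [if_neg hes] at hl'; simp at hl'

/-- one firing step cannot create resource identifiers -/
lemma aux_step (hWT : C.N.WellTyped)
    {m m' : Marking (P ⊕ Lam × Bool) I} {t : T} {ψ : V → I}
    (hf : (C.net).Fires m t ψ m') {r : I}
    (hres : C.isRes (C.N.typeI r)) (hr : r ∈ idsOf m') : r ∈ idsOf m := by
  obtain ⟨hinj, hty, hfresh, hpre, hbal⟩ := hf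
  obtain ⟨p, l, hl, hrl⟩ := hr
  have hle : m' p ≤ m p + ((C.net).postArc t p).map (fun l => l.map ψ) := by
    rw [← hbal p]; exact Multiset.le_add_right _ _
  rcases Multiset.mem_add.mp (Multiset.mem_of_le hle hl) with hmem | hmem
  · exact ⟨p, l, hmem, hrl⟩
  · obtain ⟨l0, hl0, rfl⟩ := Multiset.mem_map.mp hmem
    obtain ⟨v, hvl0, rfl⟩ := List.mem_map.mp hrl
    have hvout : v ∈ (C.net).outVars t := ⟨p, l0, hl0, hvl0⟩
    have hresv : C.isRes (C.N.typeV v) := by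
      have : (C.net).typeI (ψ v) = (C.net).typeV v := hty v
      exact this ▸ hres
    obtain ⟨p0, l0', hl0', hv0⟩ := aux_key C hWT hvout hresv
    refine ⟨p0, l0'.map ψ, Multiset.mem_of_le (hpre p0)
      (Multiset.mem_map_of_mem _ hl0'), List.mem_map_of_mem (f := ψ) hv0⟩

end Aux

/-- every marked resource closure satisfies resource
preservation: every resource identifier occurring in a reachable marking
already occurs in the initial marking. -/
theorem stmt_14 {P T Lam I V : Type*} (C : FullRClosure P T Lam I V)
    (m0 : Marking P I) (Res : Lam → Finset I)
    (hWT : C.N.WellTyped) (hMT : C.N.MarkingTyped m0)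
    (hRes : ∀ lam, ∀ r ∈ Res lam, C.N.typeI r = C.etaOf lam)
    (m : Marking (P ⊕ Lam × Bool) I)
    (hreach : C.net.Reach (C.init m0 Res) m) :
    ∀ r : I, C.isRes (C.N.typeI r) → r ∈ idsOf m → r ∈ idsOf (C.init m0 Res) := by
  intro r hres hr
  induction hreach with
  | refl => exact hr
  | tail _ step ih =>
    obtain ⟨t, ψ, hf⟩ := step
    exact ih (aux_step C hWT hf hres hr)
end

section
/- Every marked resource closure of a marked t-PNID satisfies resource exclusive assignment: in every reachable marking m, each resource identifier r occurring in m is carried by exactly one tuple in the support of m, which is either the unary tuple (r) in the resource place or a pair (o, r) in the assignment place for a single object o. -/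
open scoped Classical

section Aux

variable {P T Lam I V : Type*} (C : FullRClosure P T Lam I V)

-- definitional unfoldings of the closure net
lemma aux_typeI : C.net.typeI = C.N.typeI := rfl
lemma aux_typeV : C.net.typeV = C.N.typeV := rfl
lemma aux_pt_inl (p : P) : C.net.placeType (Sum.inl p) = C.N.placeType p := rfl
lemma aux_pt_res (lam : Lam) : C.net.placeType (Sum.inr (lam, false)) = [C.etaOf lam] := rfl
lemma aux_pt_asg (lam : Lam) : C.net.placeType (Sum.inr (lam, true)) = [lam, C.etaOf lam] := rfl
lemma aux_pre_inl (p : P) (t : T) : C.net.preArc (Sum.inl p) t = C.N.preArc p t := rfl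
lemma aux_post_inl (p : P) (t : T) : C.net.postArc t (Sum.inl p) = C.N.postArc t p := rfl
lemma aux_pre_res (lam : Lam) (t : T) :
    C.net.preArc (Sum.inr (lam, false)) t
      = if C.N.emitter lam t then C.resTok lam t else 0 := rfl
lemma aux_post_res (lam : Lam) (t : T) :
    C.net.postArc t (Sum.inr (lam, false))
      = if C.ret lam t then C.resTok lam t else 0 := rfl
lemma aux_pre_asg (lam : Lam) (t : T) :
    C.net.preArc (Sum.inr (lam, true)) t
      = if C.N.collector lam t ∨ C.sync lam t then C.asgTok lam t else 0 := rfl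
lemma aux_post_asg (lam : Lam) (t : T) :
    C.net.postArc t (Sum.inr (lam, true))
      = if C.N.emitter lam t ∨ C.sync lam t then C.asgTok lam t else 0 := rfl
lemma aux_init_inl (m0 : Marking P I) (Res : Lam → Finset I) (p : P) :
    C.init m0 Res (Sum.inl p) = m0 p := rfl
lemma aux_init_res (m0 : Marking P I) (Res : Lam → Finset I) (lam : Lam) :
    C.init m0 Res (Sum.inr (lam, false)) = (Res lam).val.map (fun r => [r]) := rfl
lemma aux_init_asg (m0 : Marking P I) (Res : Lam → Finset I) (lam : Lam) :
    C.init m0 Res (Sum.inr (lam, true)) = 0 := rfl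

lemma aux_mem_resTok {lam : Lam} {t : T} {l : List V} :
    l ∈ C.resTok lam t ↔ ∃ v ∈ C.resV lam t, l = [v] := by
  simp [FullRClosure.resTok, eq_comm]

lemma aux_mem_asgTok {lam : Lam} {t : T} {l : List V} :
    l ∈ C.asgTok lam t ↔ ∃ x ∈ (C.objV lam t).zip (C.resV lam t), l = [x.1, x.2] := by
  simp [FullRClosure.asgTok, eq_comm]

lemma aux_inVars_used (hWT : C.N.WellTyped) {t : T} {v : V} (h : v ∈ C.N.inVars t) :
    C.N.typeV v ∈ C.N.typesUsed := by
  obtain ⟨p, l, hl, hv⟩ := h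
  exact ⟨p, (hWT.1 p t l hl) ▸ List.mem_map_of_mem hv⟩

lemma aux_outVars_used (hWT : C.N.WellTyped) {t : T} {v : V} (h : v ∈ C.N.outVars t) :
    C.N.typeV v ∈ C.N.typesUsed := by
  obtain ⟨p, l, hl, hv⟩ := h
  exact ⟨p, (hWT.2 t p l hl) ▸ List.mem_map_of_mem hv⟩

lemma aux_emitter_not_res (hWT : C.N.WellTyped) {lam : Lam} {t : T}
    (h : C.N.emitter lam t) : ¬ C.isRes lam := by
  obtain ⟨v, hv, hty⟩ := h
  exact C.obj_used lam (hty ▸ aux_outVars_used C hWT hv.1)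

lemma aux_collector_not_res (hWT : C.N.WellTyped) {lam : Lam} {t : T}
    (h : C.N.collector lam t) : ¬ C.isRes lam := by
  obtain ⟨v, hv, hty⟩ := h
  exact C.obj_used lam (hty ▸ aux_inVars_used C hWT hv.1)

lemma aux_objV_type {lam : Lam} {t : T}
    (h : C.N.emitter lam t ∨ C.N.collector lam t ∨ C.sync lam t) :
    ∀ x ∈ C.objV lam t, C.N.typeV x = lam := by
  intro x hx
  rcases h with h | h | h
  · exact ((C.objV_emit lam t h x).1 hx).1
  · exact ((C.objV_col lam t h x).1 hx).1
  · exact ((C.objV_sync lam t h x).1 hx).1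

lemma aux_objV_nil (hWT : C.N.WellTyped) {lam : Lam} {t : T}
    (hres : C.isRes lam) (hS : C.sync lam t) : C.objV lam t = [] := by
  rw [List.eq_nil_iff_forall_not_mem]
  intro v hv
  obtain ⟨hty, hin⟩ := (C.objV_sync lam t hS v).1 hv
  exact C.obj_used lam (hty ▸ aux_inVars_used C hWT hin) hres

lemma aux_asgTok_nil (hWT : C.N.WellTyped) {lam : Lam} {t : T}
    (hres : C.isRes lam) (hS : C.sync lam t) : C.asgTok lam t = 0 := by
  rw [FullRClosure.asgTok, aux_objV_nil C hWT hres hS]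
  rfl

lemma aux_net_wt (hWT : C.N.WellTyped) : C.net.WellTyped := by
  constructor
  · rintro (p | ⟨lam, b⟩) t l hl
    · exact hWT.1 p t l hl
    · cases b
      · rw [aux_pre_res] at hl
        rw [aux_typeV, aux_pt_res]
        split_ifs at hl with h
        · obtain ⟨v, hv, rfl⟩ := (aux_mem_resTok C).1 hl
          simp [C.resV_type lam t v hv]
        · exact absurd hl (Multiset.notMem_zero l)
      · rw [aux_pre_asg] at hl
        rw [aux_typeV, aux_pt_asg]
        split_ifs at hl with h
        · obtain ⟨x, hx, rfl⟩ := (aux_mem_asgTok C).1 hl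
          have h1 := (List.of_mem_zip hx).1
          have h2 := (List.of_mem_zip hx).2
          simp [aux_objV_type C (Or.inr h) x.1 h1, C.resV_type lam t x.2 h2]
        · exact absurd hl (Multiset.notMem_zero l)
  · rintro t (p | ⟨lam, b⟩) l hl
    · exact hWT.2 t p l hl
    · cases b
      · rw [aux_post_res] at hl
        rw [aux_typeV, aux_pt_res]
        split_ifs at hl with h
        · obtain ⟨v, hv, rfl⟩ := (aux_mem_resTok C).1 hl
          simp [C.resV_type lam t v hv]
        · exact absurd hl (Multiset.notMem_zero l)
      · rw [aux_post_asg] at hl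
        rw [aux_typeV, aux_pt_asg]
        split_ifs at hl with h
        · obtain ⟨x, hx, rfl⟩ := (aux_mem_asgTok C).1 hl
          have h1 := (List.of_mem_zip hx).1
          have h2 := (List.of_mem_zip hx).2
          have hg : C.N.emitter lam t ∨ C.N.collector lam t ∨ C.sync lam t := by tauto
          simp [aux_objV_type C hg x.1 h1, C.resV_type lam t x.2 h2]
        · exact absurd hl (Multiset.notMem_zero l)

/-- The invariant. -/
def AuxInv (m : Marking (P ⊕ Lam × Bool) I) : Prop :=
  C.net.MarkingTyped m ∧
  (∀ lam, C.isRes lam → m (Sum.inr (lam, true)) = 0) ∧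
  (∀ (r : I) (lam : Lam), C.N.typeI r = C.etaOf lam →
     Multiset.countP (fun l => r ∈ l) (m (Sum.inr (lam, false))) +
     Multiset.countP (fun l => r ∈ l) (m (Sum.inr (lam, true))) ≤ 1)

lemma aux_count_resTok (r : I) (ψ : V → I) (lam : Lam) (t : T) :
    Multiset.countP (fun l => r ∈ l) ((C.resTok lam t).map (fun l => l.map ψ))
      = (C.resV lam t).countP (fun v => decide (r = ψ v)) := by
  simp only [FullRClosure.resTok, Multiset.map_coe, Multiset.coe_countP,
    List.map_map, List.countP_map]
  apply List.countP_congr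
  intro v _
  simp [Function.comp]

lemma aux_count_asgTok (r : I) (ψ : V → I) {lam : Lam} {t : T}
    (hx : ∀ x ∈ C.objV lam t, r ≠ ψ x) :
    Multiset.countP (fun l => r ∈ l) ((C.asgTok lam t).map (fun l => l.map ψ))
      = (C.resV lam t).countP (fun v => decide (r = ψ v)) := by
  simp only [FullRClosure.asgTok, Multiset.map_coe, Multiset.coe_countP,
    List.map_map, List.countP_map]
  conv_rhs => rw [← List.map_snd_zip (le_of_eq (C.len_eq lam t)),
    List.countP_map]
  apply List.countP_congr
  intro x hx'
  have h1 := (List.of_mem_zip hx').1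
  simp [Function.comp, hx x.1 h1]

lemma aux_init_inv (m0 : Marking P I) (Res : Lam → Finset I)
    (hMT : C.N.MarkingTyped m0)
    (hRes : ∀ lam, ∀ r ∈ Res lam, C.N.typeI r = C.etaOf lam) :
    AuxInv C (C.init m0 Res) := by
  refine ⟨?_, ?_, ?_⟩
  · rintro (p | ⟨lam, b⟩) l hl
    · exact hMT p l hl
    · cases b
      · rw [aux_init_res] at hl
        obtain ⟨r, hr, rfl⟩ := Multiset.mem_map.1 hl
        rw [aux_typeI, aux_pt_res]
        simp [hRes lam r hr]
      · rw [aux_init_asg] at hl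
        exact absurd hl (Multiset.notMem_zero l)
  · intro lam _
    rfl
  · intro r lam _
    rw [aux_init_res, aux_init_asg, Multiset.countP_zero, add_zero]
    have h1 : Multiset.countP (fun l => r ∈ l) ((Res lam).val.map (fun r => [r]))
        = Multiset.count r (Res lam).val := by
      rw [Multiset.count, Multiset.countP_map, ← Multiset.countP_eq_card_filter]
      exact Multiset.countP_congr rfl (fun a _ => by simp)
    rw [h1]
    exact Multiset.nodup_iff_count_le_one.mp (Res lam).nodup r

lemma aux_step_s15 (hWT : C.N.WellTyped) {m m' : Marking (P ⊕ Lam × Bool) I} {t : T} {ψ : V → I}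
    (hInv : AuxInv C m) (hF : C.net.Fires m t ψ m') : AuxInv C m' := by
  obtain ⟨hMT, hZ, hC⟩ := hInv
  obtain ⟨hinj, htyp, hfresh, hen, heq⟩ := hF
  have hnwt := aux_net_wt C hWT
  refine ⟨?_, ?_, ?_⟩
  · -- typedness is preserved
    intro p l hl
    have hmem : l ∈ m p + (C.net.postArc t p).map (fun l => l.map ψ) := by
      rw [← heq p]
      exact Multiset.mem_add.2 (Or.inl hl)
    rcases Multiset.mem_add.1 hmem with h | h
    · exact hMT p l h
    · obtain ⟨l', hl', rfl⟩ := Multiset.mem_map.1 h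
      rw [List.map_map]
      have h2 : ∀ v ∈ l', (C.net.typeI ∘ ψ) v = C.net.typeV v := fun v _ => htyp v
      rw [List.map_congr_left h2]
      exact hnwt.2 t p l' hl'
  · -- assignment places of resource types stay empty
    intro lam hres
    have hpre : C.net.preArc (Sum.inr (lam, true)) t = 0 := by
      rw [aux_pre_asg]
      split_ifs with h
      · rcases h with h | h
        · exact absurd hres (aux_collector_not_res C hWT h)
        · exact aux_asgTok_nil C hWT hres h
      · rfl
    have hpost : C.net.postArc t (Sum.inr (lam, true)) = 0 := by
      rw [aux_post_asg]
      split_ifs with h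
      · rcases h with h | h
        · exact absurd hres (aux_emitter_not_res C hWT h)
        · exact aux_asgTok_nil C hWT hres h
      · rfl
    have h3 := heq (Sum.inr (lam, true))
    rw [hpre, hpost, Multiset.map_zero, add_zero, add_zero] at h3
    rw [h3]
    exact hZ lam hres
  · -- the count bound is preserved
    intro r lam hrl
    by_cases hres : C.isRes lam
    · -- all arcs at the two places vanish
      have hpre1 : C.net.preArc (Sum.inr (lam, false)) t = 0 := by
        rw [aux_pre_res, if_neg (fun h => aux_emitter_not_res C hWT h hres)]
      have hpost1 : C.net.postArc t (Sum.inr (lam, false)) = 0 := by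
        rw [aux_post_res,
          if_neg (fun h => aux_collector_not_res C hWT (C.ret_col lam t h) hres)]
      have hpre2 : C.net.preArc (Sum.inr (lam, true)) t = 0 := by
        rw [aux_pre_asg]
        split_ifs with h
        · rcases h with h | h
          · exact absurd hres (aux_collector_not_res C hWT h)
          · exact aux_asgTok_nil C hWT hres h
        · rfl
      have hpost2 : C.net.postArc t (Sum.inr (lam, true)) = 0 := by
        rw [aux_post_asg]
        split_ifs with h
        · rcases h with h | h
          · exact absurd hres (aux_emitter_not_res C hWT h)
          · exact aux_asgTok_nil C hWT hres h
        · rfl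
      have hA := heq (Sum.inr (lam, false))
      have hB := heq (Sum.inr (lam, true))
      rw [hpre1, hpost1, Multiset.map_zero, add_zero, add_zero] at hA
      rw [hpre2, hpost2, Multiset.map_zero, add_zero, add_zero] at hB
      rw [hA, hB]
      exact hC r lam hrl
    · -- main case: object type lam
      set e := (C.resV lam t).countP (fun v => decide (r = ψ v)) with he
      have hxner : (C.N.emitter lam t ∨ C.N.collector lam t ∨ C.sync lam t) →
          ∀ x ∈ C.objV lam t, r ≠ ψ x := by
        intro hg x hx hr
        have htyp' : ∀ v, C.N.typeI (ψ v) = C.N.typeV v := htyp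
        have h1 : C.N.typeV x = lam := aux_objV_type C hg x hx
        have h3 : C.etaOf lam = lam := by rw [← hrl, hr, htyp' x, h1]
        exact hres (h3 ▸ C.eta_res lam)
      have key : ∀ pl, Multiset.countP (fun l => r ∈ l) (m' pl) +
            Multiset.countP (fun l => r ∈ l) ((C.net.preArc pl t).map (fun l => l.map ψ)) =
          Multiset.countP (fun l => r ∈ l) (m pl) +
            Multiset.countP (fun l => r ∈ l) ((C.net.postArc t pl).map (fun l => l.map ψ)) := by
        intro pl
        have h4 := congrArg (Multiset.countP (fun l => r ∈ l)) (heq pl)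
        rwa [Multiset.countP_add, Multiset.countP_add] at h4
      have hA := key (Sum.inr (lam, false))
      have hB := key (Sum.inr (lam, true))
      rw [aux_pre_res, aux_post_res] at hA
      rw [aux_pre_asg, aux_post_asg] at hB
      have hC' := hC r lam hrl
      by_cases hS : C.sync lam t
      · obtain ⟨hK, hE⟩ := C.sync_int lam t hS
        have hR : ¬ C.ret lam t := fun h => hK (C.ret_col lam t h)
        rw [if_neg hE, if_neg hR, Multiset.map_zero, Multiset.countP_zero] at hA
        rw [if_pos (Or.inr hS), if_pos (Or.inr hS),
          aux_count_asgTok C r ψ (hxner (Or.inr (Or.inr hS)))] at hB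
        omega
      · by_cases hE : C.N.emitter lam t <;> by_cases hK : C.N.collector lam t <;>
          by_cases hR : C.ret lam t
        all_goals first
          | exact absurd (C.ret_col lam t hR) hK
          | (first
              | rw [if_pos hE, aux_count_resTok] at hA
              | rw [if_neg hE, Multiset.map_zero, Multiset.countP_zero] at hA)
            ; (first
              | rw [if_pos hR, aux_count_resTok] at hA
              | rw [if_neg hR, Multiset.map_zero, Multiset.countP_zero] at hA)
            ; (first
              | rw [if_pos (Or.inl hK),
                  aux_count_asgTok C r ψ (hxner (Or.inr (Or.inl hK)))] at hB
              | rw [if_neg (by tauto : ¬ (C.N.collector lam t ∨ C.sync lam t)),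
                  Multiset.map_zero, Multiset.countP_zero] at hB)
            ; (first
              | rw [if_pos (Or.inl hE),
                  aux_count_asgTok C r ψ (hxner (Or.inl hE))] at hB
              | rw [if_neg (by tauto : ¬ (C.N.emitter lam t ∨ C.sync lam t)),
                  Multiset.map_zero, Multiset.countP_zero] at hB)
            ; omega

lemma aux_reach (m0 : Marking P I) (Res : Lam → Finset I)
    (hWT : C.N.WellTyped) (hMT : C.N.MarkingTyped m0)
    (hRes : ∀ lam, ∀ r ∈ Res lam, C.N.typeI r = C.etaOf lam)
    {m : Marking (P ⊕ Lam × Bool) I}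
    (h : C.net.Reach (C.init m0 Res) m) : AuxInv C m := by
  have h' : Relation.ReflTransGen (fun m m' => ∃ t ψ, C.net.Fires m t ψ m')
      (C.init m0 Res) m := h
  clear h
  induction h' with
  | refl => exact aux_init_inv C m0 Res hMT hRes
  | tail _ h2 ih =>
      obtain ⟨t, ψ, hF⟩ := h2
      exact aux_step_s15 C hWT ih hF

lemma aux_locate {m : Marking (P ⊕ Lam × Bool) I} (hInv : AuxInv C m) {r : I}
    (hres : C.isRes (C.N.typeI r)) :
    ∀ p l, l ∈ m p → r ∈ l →
      ∃ lam, C.N.typeI r = C.etaOf lam ∧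
        ((p = Sum.inr (lam, false) ∧ l = [r]) ∨
         (∃ o, p = Sum.inr (lam, true) ∧ l = [o, r])) := by
  obtain ⟨hMT, hZ, _⟩ := hInv
  rintro (p | ⟨lam, b⟩) l hl hrl
  · exfalso
    have h1 := hMT (Sum.inl p) l hl
    rw [aux_typeI, aux_pt_inl] at h1
    exact C.obj_used _ ⟨p, h1 ▸ List.mem_map_of_mem hrl⟩ hres
  · cases b
    · have h1 := hMT (Sum.inr (lam, false)) l hl
      rw [aux_typeI, aux_pt_res] at h1
      have hlen : l.length = 1 := by simpa using congrArg List.length h1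
      obtain ⟨a, rfl⟩ := List.length_eq_one_iff.mp hlen
      have ha : C.N.typeI a = C.etaOf lam := by simpa using h1
      have har : r = a := by simpa using hrl
      subst har
      exact ⟨lam, ha, Or.inl ⟨rfl, rfl⟩⟩
    · have h1 := hMT (Sum.inr (lam, true)) l hl
      rw [aux_typeI, aux_pt_asg] at h1
      have hnres : ¬ C.isRes lam := by
        intro h
        rw [hZ lam h] at hl
        exact Multiset.notMem_zero l hl
      have hlen : l.length = 2 := by simpa using congrArg List.length h1
      obtain ⟨o, x, rfl⟩ := List.length_eq_two.mp hlen
      simp only [List.map_cons, List.map_nil, List.cons.injEq, and_true] at h1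
      rcases (by simpa using hrl : r = o ∨ r = x) with rfl | rfl
      · exact absurd (h1.1 ▸ hres) hnres
      · exact ⟨lam, h1.2, Or.inr ⟨o, rfl, rfl⟩⟩

lemma aux_two {α : Type*} {a b : α} {s : Multiset α} (p : α → Prop) [DecidablePred p]
    (hab : a ≠ b) (ha : a ∈ s) (hb : b ∈ s) (pa : p a) (pb : p b) :
    2 ≤ Multiset.countP p s := by
  rw [Multiset.countP_eq_card_filter]
  have ha' : a ∈ s.filter p := Multiset.mem_filter.2 ⟨ha, pa⟩
  obtain ⟨u, hu⟩ := Multiset.exists_cons_of_mem ha'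
  have hb' : b ∈ u := by
    have : b ∈ s.filter p := Multiset.mem_filter.2 ⟨hb, pb⟩
    rw [hu] at this
    rcases Multiset.mem_cons.1 this with h | h
    · exact absurd h.symm hab
    · exact h
  obtain ⟨w, hw⟩ := Multiset.exists_cons_of_mem hb'
  rw [hu, hw]
  simp

end Aux

/-- every marked resource closure satisfies resource exclusive
assignment: in every reachable marking, each occurring resource identifier is
carried by exactly one tuple in the support of the marking, which is either
the unary tuple `(r)` in a resource place or a pair `(o, r)` in an assignment
place. -/
theorem stmt_15 {P T Lam I V : Type*} (C : FullRClosure P T Lam I V)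
    (m0 : Marking P I) (Res : Lam → Finset I)
    (hWT : C.N.WellTyped) (hMT : C.N.MarkingTyped m0)
    (hRes : ∀ lam, ∀ r ∈ Res lam, C.N.typeI r = C.etaOf lam)
    (m : Marking (P ⊕ Lam × Bool) I)
    (hreach : C.net.Reach (C.init m0 Res) m) :
    ∀ r : I, C.isRes (C.N.typeI r) → r ∈ idsOf m →
      (∃! vec : List I, r ∈ vec ∧ ∃ p, vec ∈ m p) ∧
      (∀ vec : List I, r ∈ vec → (∃ p, vec ∈ m p) →
        (vec = [r] ∧ ∃ lam, vec ∈ m (Sum.inr (lam, false))) ∨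
        (∃ o lam, vec = [o, r] ∧ vec ∈ m (Sum.inr (lam, true)))) := by
  intro r hres hr
  have hInv := aux_reach C m0 Res hWT hMT hRes hreach
  obtain ⟨p0, l0, hl0, hrl0⟩ := hr
  obtain ⟨lam, hlam, hcase⟩ := aux_locate C hInv hres p0 l0 hl0 hrl0
  constructor
  · refine ⟨l0, ⟨hrl0, p0, hl0⟩, ?_⟩
    rintro vec ⟨hrv, p1, hv1⟩
    by_contra hne
    obtain ⟨lam', hlam', hcase'⟩ := aux_locate C hInv hres p1 vec hv1 hrv
    have hll : lam = lam' := C.eta_inj (by rw [← hlam, ← hlam'])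
    subst hll
    have hCnt := hInv.2.2 r lam hlam
    rcases hcase with ⟨hp, hl⟩ | ⟨o, hp, hl⟩ <;>
      rcases hcase' with ⟨hp', hl'⟩ | ⟨o', hp', hl'⟩
    · exact hne (hl'.trans hl.symm)
    · subst hp; subst hp'
      have c1 : 0 < Multiset.countP (fun l => r ∈ l) (m (Sum.inr (lam, false))) :=
        Multiset.countP_pos.2 ⟨l0, hl0, hrl0⟩
      have c2 : 0 < Multiset.countP (fun l => r ∈ l) (m (Sum.inr (lam, true))) :=
        Multiset.countP_pos.2 ⟨vec, hv1, hrv⟩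
      omega
    · subst hp; subst hp'
      have c1 : 0 < Multiset.countP (fun l => r ∈ l) (m (Sum.inr (lam, true))) :=
        Multiset.countP_pos.2 ⟨l0, hl0, hrl0⟩
      have c2 : 0 < Multiset.countP (fun l => r ∈ l) (m (Sum.inr (lam, false))) :=
        Multiset.countP_pos.2 ⟨vec, hv1, hrv⟩
      omega
    · subst hp; subst hp'
      have c1 : 2 ≤ Multiset.countP (fun l => r ∈ l) (m (Sum.inr (lam, true))) :=
        aux_two _ hne hv1 hl0 hrv hrl0
      omega
  · rintro vec hrv ⟨p1, hv1⟩
    obtain ⟨lam', _, hcase'⟩ := aux_locate C hInv hres p1 vec hv1 hrv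
    rcases hcase' with ⟨hp, hl⟩ | ⟨o, hp, hl⟩
    · exact Or.inl ⟨hl, lam', hp ▸ hv1⟩
    · exact Or.inr ⟨o, lam', hl, hp ▸ hv1⟩
end
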